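/- arXiv:0709.2857 — 4 statements merged into one kernel-verified Lean document; each statement's English description precedes it below -/
import Mathlib

section
/- Let $R$ be a commutative ring, let $n \geq 1$, and let $t \in R$ satisfy $t^2 = 0$. Let $c_0 = 1, c_1, c_2, \dots$ be elements of $R$ such that every product $c_{r_1} c_{r_2} \cdots c_{r_k}$ with all $r_i \geq 1$ and $r_1 + \cdots + r_k > n$ equals $0$. Define $c'_j = c_j + 2 c_{j-1} t$ for $j \geq 1$. Then for all $r_1, \dots, r_k \geq 1$ with $r_1 + \cdots + r_k = n+1$ one has $\prod_{j=1}^{k} c'_{r_j} = 2t \cdot \sum_{j=1}^{k} c_{r_1} \cdots c_{r_j - 1} \cdots c_{r_k}$ (where in the $j$-th summand the index $r_j$ is decreased by one, and $c_0 = 1$). -/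
/-- Algebraic core of the product formula for the Chern numbers of `A × ℂP¹`:
in a commutative ring `R` with an element `t` of square zero, given classes
`c 0 = 1, c 1, c 2, ...` whose products of total degree exceeding `n` vanish,
the products of the classes `c'_j = c_j + 2 c_{j-1} t` in total degree `n + 1`
are given by `2 t` times the sum of the products where one index is lowered. -/
theorem chern_numbers_of_product_with_CP1
    {R : Type*} [CommRing R] (n : ℕ) (hn : 1 ≤ n) (t : R) (ht : t ^ 2 = 0)
    (c : ℕ → R) (hc0 : c 0 = 1)
    (hvanish : ∀ (m : ℕ) (s : Fin m → ℕ), (∀ i, 1 ≤ s i) → n < ∑ i, s i →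
      ∏ i, c (s i) = 0)
    (k : ℕ) (r : Fin k → ℕ) (hr : ∀ i, 1 ≤ r i) (hsum : ∑ i, r i = n + 1) :
    ∏ i, (c (r i) + 2 * c (r i - 1) * t) =
      2 * t * ∑ j, ∏ i, c (if i = j then r i - 1 else r i) := by
  classical
  have hcprod : ∏ i, c (r i) = 0 := hvanish k r hr (by omega)
  have key : ∀ S : Finset (Fin k), 2 ≤ S.card →
      ∏ i ∈ S, (2 * c (r i - 1) * t) = 0 := by
    intro S hS
    have h1 : ∏ i ∈ S, (2 * c (r i - 1) * t)
        = (∏ i ∈ S, (2 * c (r i - 1))) * t ^ S.card := by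
      rw [Finset.prod_mul_distrib, Finset.prod_const]
    have h2 : t ^ S.card = 0 := by
      obtain ⟨m, hm⟩ := Nat.exists_eq_add_of_le hS
      rw [hm, pow_add, ht, zero_mul]
    rw [h1, h2, mul_zero]
  rw [Finset.prod_add]
  have hinj : Function.Injective (fun j : Fin k => (Finset.univ \ {j} : Finset (Fin k))) := by
    intro a b hab
    simp only at hab
    by_contra hne
    have : a ∉ (Finset.univ \ {b} : Finset (Fin k)) := by rw [← hab]; simp
    simp [hne] at this
  have hsub : (Finset.univ.image fun j : Fin k => (Finset.univ \ {j} : Finset (Fin k)))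
      ⊆ Finset.univ.powerset := by
    intro T _; simp
  have hzero : ∀ T ∈ Finset.univ.powerset,
      T ∉ (Finset.univ.image fun j : Fin k => (Finset.univ \ {j} : Finset (Fin k))) →
      (∏ i ∈ T, c (r i)) * ∏ i ∈ Finset.univ \ T, (2 * c (r i - 1) * t) = 0 := by
    intro T _ hT
    rcases Nat.lt_or_ge (Finset.univ \ T).card 2 with hcard | hcard
    · interval_cases h : (Finset.univ \ T).card
      · have : (Finset.univ \ T : Finset (Fin k)) = ∅ := Finset.card_eq_zero.mp h
        have hTuniv : T = Finset.univ := by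
          have := Finset.sdiff_eq_empty_iff_subset.mp this
          exact Finset.eq_univ_of_forall fun x => this (Finset.mem_univ x)
        rw [hTuniv, hcprod, zero_mul]
      · obtain ⟨j, hj⟩ := Finset.card_eq_one.mp h
        exfalso
        apply hT
        refine Finset.mem_image.mpr ⟨j, Finset.mem_univ j, ?_⟩
        have : T = Finset.univ \ (Finset.univ \ T) := by
          ext x; simp
        rw [this, hj]
    · rw [key _ hcard, mul_zero]
  rw [← Finset.sum_subset hsub (fun T hT hT' => hzero T hT hT'),
    Finset.sum_image (fun a _ b _ h => hinj h), Finset.mul_sum]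
  apply Finset.sum_congr rfl
  intro j _
  have hsd : (Finset.univ \ (Finset.univ \ {j}) : Finset (Fin k)) = {j} := by
    ext x; simp
  rw [hsd, Finset.prod_singleton]
  have hsplit : ∏ i, c (if i = j then r i - 1 else r i)
      = c (r j - 1) * ∏ i ∈ Finset.univ.erase j, c (r i) := by
    rw [← Finset.mul_prod_erase _ _ (Finset.mem_univ j)]
    simp only [if_pos rfl]
    congr 1
    apply Finset.prod_congr rfl
    intro i hi
    rw [if_neg (Finset.ne_of_mem_erase hi)]
  have herase : (Finset.univ \ {j} : Finset (Fin k)) = Finset.univ.erase j := by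
    simp [Finset.sdiff_singleton_eq_erase]
  rw [hsplit, herase]
  ring
end

section
/- Let $n \geq 3$ be an odd natural number and let $a_0, a_1, \dots, a_n$ be rational numbers such that $a_p = -a_{n-p}$ for all $0 \leq p \leq n$, and such that for every $k$ with $2 \leq k \leq n$ one has $\sum_{p=k}^{n} (-1)^p \binom{p}{k} a_p = 0$. Then $a_p = 0$ for all $0 \leq p \leq n$. -/
/-- Combinatorial core of the Proposition on odd-dimensional Kähler manifolds:
if the rationals `a 0, ..., a n` (the coefficients of `c₁ⁿ` in the `χ_p`-genera)
satisfy `a p = -a (n-p)` and Salamon's relations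
`∑_{p=k}^n (-1)^p (p choose k) a p = 0` for all `2 ≤ k ≤ n`, with `n ≥ 3` odd,
then all `a p` vanish. -/
theorem coefficients_vanish_of_salamon_relations
    (n : ℕ) (hn : 3 ≤ n) (hodd : Odd n) (a : ℕ → ℚ)
    (hsym : ∀ p ≤ n, a p = -a (n - p))
    (hsal : ∀ k, 2 ≤ k → k ≤ n →
      ∑ p ∈ Finset.Icc k n, (-1 : ℚ) ^ p * (p.choose k) * a p = 0) :
    ∀ p ≤ n, a p = 0 := by
  have key : ∀ m k, 2 ≤ k → k ≤ n → n - k ≤ m → a k = 0 := by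
    intro m
    induction m with
    | zero =>
      intro k h2 hkn hm
      have hk : k = n := by omega
      subst hk
      have h := hsal k h2 le_rfl
      rw [Finset.Icc_self, Finset.sum_singleton, Nat.choose_self] at h
      have hne : ((-1 : ℚ) ^ k) ≠ 0 := by positivity
      have : ((-1 : ℚ) ^ k) * a k = 0 := by push_cast at h; linarith
      exact (mul_eq_zero.mp this).resolve_left hne
    | succ m ih =>
      intro k h2 hkn hm
      have h := hsal k h2 hkn
      have hsum : ∑ p ∈ Finset.Icc k n, (-1 : ℚ) ^ p * (p.choose k) * a p
          = (-1 : ℚ) ^ k * (k.choose k) * a k := by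
        apply Finset.sum_eq_single_of_mem
        · simp [Finset.mem_Icc, hkn]
        · intro p hp hpk
          rw [Finset.mem_Icc] at hp
          have : a p = 0 := ih p (by omega) hp.2 (by omega)
          simp [this]
      rw [hsum, Nat.choose_self] at h
      have hne : ((-1 : ℚ) ^ k) ≠ 0 := by positivity
      have : ((-1 : ℚ) ^ k) * a k = 0 := by push_cast at h; linarith
      exact (mul_eq_zero.mp this).resolve_left hne
  intro p hp
  by_cases h2 : 2 ≤ p
  · exact key n p h2 hp (by omega)
  · interval_cases p
    · have := hsym 0 (by omega)
      simp only [Nat.sub_zero] at this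
      rw [this, key n n (by omega) le_rfl (by omega)]; ring
    · have := hsym 1 (by omega)
      rw [this, key n (n - 1) (by omega) (by omega) (by omega)]; ring
end

section
/- Let $(a_1, b_1)$ and $(a_2, b_2)$ be linearly independent vectors in $\mathbb{Q}^2$, and for $i = 1, 2$ set $v_i = (0,\ 2a_i,\ 4a_i,\ 4a_i + 2b_i,\ 8b_i) \in \mathbb{Q}^5$. Then the space of linear functionals $\varphi$ on $\mathbb{Q}^5$ with $\varphi(v_1) = \varphi(v_2) = 0$ is exactly the three-dimensional span of the functionals given (in coordinates) by $(1,0,0,0,0)$, $(0,0,4,-4,1)$, and $(2,-2,1,0,0)$. -/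
/-- The linear functional on `ℚ⁵` with coordinate vector `c`,
namely `x ↦ ∑ i, c i * x i`. -/
noncomputable def dotFunctional5 (c : Fin 5 → ℚ) : Module.Dual ℚ (Fin 5 → ℚ) :=
  ∑ i, c i • LinearMap.proj i


lemma dotFunctional5_apply (c x : Fin 5 → ℚ) :
    dotFunctional5 c x = ∑ i, c i * x i := by
  simp [dotFunctional5]

lemma dotFunctional5_single (c : Fin 5 → ℚ) (i : Fin 5) :
    dotFunctional5 c (Pi.single i 1) = c i := by
  rw [dotFunctional5_apply]
  simp [Pi.single_apply]

/-- Formal core of the four-folds theorem: with coordinates on `ℚ⁵` corresponding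
to the Chern numbers `(c₄, c₁c₃, c₂², c₁²c₂, c₁⁴)`, if `(a₁,b₁)` and `(a₂,b₂)` are
linearly independent in `ℚ²`, then the linear functionals annihilating both vectors
`vᵢ = (0, 2aᵢ, 4aᵢ, 4aᵢ + 2bᵢ, 8bᵢ)` form exactly the three-dimensional span of the
functionals with coordinate vectors `(1,0,0,0,0)` (the Euler number `c₄`),
`(0,0,4,-4,1)` (the Pontryagin number `p₁²`) and `(2,-2,1,0,0)` (the Pontryagin
number `p₂`). -/
theorem invariant_chern_combinations_fourfolds
    (a1 b1 a2 b2 : ℚ) (hindep : LinearIndependent ℚ ![(a1, b1), (a2, b2)]) :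
    {φ : Module.Dual ℚ (Fin 5 → ℚ) |
        φ ![0, 2 * a1, 4 * a1, 4 * a1 + 2 * b1, 8 * b1] = 0 ∧
        φ ![0, 2 * a2, 4 * a2, 4 * a2 + 2 * b2, 8 * b2] = 0} =
      ↑(Submodule.span ℚ {dotFunctional5 ![1, 0, 0, 0, 0],
          dotFunctional5 ![0, 0, 4, -4, 1], dotFunctional5 ![2, -2, 1, 0, 0]}) ∧
    Module.finrank ℚ
      (Submodule.span ℚ {dotFunctional5 ![1, 0, 0, 0, 0],
          dotFunctional5 ![0, 0, 4, -4, 1], dotFunctional5 ![2, -2, 1, 0, 0]}) = 3 := by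
  classical
  rw [LinearIndependent.pair_iff] at hindep
  have det_ne : a1 * b2 - a2 * b1 ≠ 0 := by
    intro h
    obtain ⟨hb2, hb1⟩ := hindep b2 (-b1) (by
      apply Prod.ext <;> simp <;> nlinarith)
    obtain ⟨ha2, ha1⟩ := hindep a2 (-a1) (by
      apply Prod.ext <;> simp <;> nlinarith)
    have h10 := hindep 1 0 (by
      apply Prod.ext <;> simp [neg_eq_zero.mp ha1, neg_eq_zero.mp hb1])
    exact one_ne_zero h10.1
  constructor
  · ext φ
    simp only [Set.mem_setOf_eq, SetLike.mem_coe]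
    constructor
    · rintro ⟨h1, h2⟩
      set t : Fin 5 → ℚ := fun i => φ (Pi.single i 1) with ht
      have key : ∀ x : Fin 5 → ℚ, φ x = ∑ i, x i * t i := by
        intro x
        have hx : x = ∑ i, x i • (Pi.single i 1 : Fin 5 → ℚ) := by
          funext j
          simp [Pi.single_apply, Finset.sum_apply]
        conv_lhs => rw [hx]
        simp [ht, mul_comm]
      rw [key, Fin.sum_univ_five] at h1 h2
      simp only [Matrix.cons_val_zero, Matrix.cons_val_one, Matrix.head_cons,
        Matrix.cons_val_two, Matrix.tail_cons, Matrix.cons_val_three,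
        Matrix.cons_val_four] at h1 h2
      have h1' : a1 * (2 * t 1 + 4 * t 2 + 4 * t 3) + b1 * (2 * t 3 + 8 * t 4) = 0 := by
        linear_combination h1
      have h2' : a2 * (2 * t 1 + 4 * t 2 + 4 * t 3) + b2 * (2 * t 3 + 8 * t 4) = 0 := by
        linear_combination h2
      have hs : 2 * t 1 + 4 * t 2 + 4 * t 3 = 0 := by
        have hd : (a1 * b2 - a2 * b1) * (2 * t 1 + 4 * t 2 + 4 * t 3) = 0 := by
          linear_combination b2 * h1' - b1 * h2'
        exact (mul_eq_zero.mp hd).resolve_left det_ne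
      have hu : 2 * t 3 + 8 * t 4 = 0 := by
        have hd : (a1 * b2 - a2 * b1) * (2 * t 3 + 8 * t 4) = 0 := by
          linear_combination a1 * h2' - a2 * h1'
        exact (mul_eq_zero.mp hd).resolve_left det_ne
      have hφ : φ = (t 0 - 2 * (t 2 - 4 * t 4)) • dotFunctional5 ![1, 0, 0, 0, 0]
          + (t 4) • dotFunctional5 ![0, 0, 4, -4, 1]
          + (t 2 - 4 * t 4) • dotFunctional5 ![2, -2, 1, 0, 0] := by
        apply LinearMap.ext
        intro x
        rw [key]
        simp only [LinearMap.add_apply, LinearMap.smul_apply,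
          dotFunctional5_apply, smul_eq_mul, Fin.sum_univ_five,
          Matrix.cons_val_zero, Matrix.cons_val_one, Matrix.head_cons,
          Matrix.cons_val_two, Matrix.tail_cons, Matrix.cons_val_three,
          Matrix.cons_val_four]
        linear_combination (x 1 / 2) * hs + (x 3 / 2 - x 1) * hu
      rw [hφ]
      refine Submodule.add_mem _ (Submodule.add_mem _ ?_ ?_) ?_ <;>
        exact Submodule.smul_mem _ _ (Submodule.subset_span (by simp))
    · intro hφ
      induction hφ using Submodule.span_induction with
      | mem f hf =>
        simp only [Set.mem_insert_iff, Set.mem_singleton_iff] at hf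
        rcases hf with rfl | rfl | rfl <;>
          constructor <;>
          · rw [dotFunctional5_apply, Fin.sum_univ_five]
            simp only [Matrix.cons_val_zero, Matrix.cons_val_one, Matrix.head_cons,
              Matrix.cons_val_two, Matrix.tail_cons, Matrix.cons_val_three,
              Matrix.cons_val_four]
            ring
      | zero => simp
      | add f g _ _ hf hg => simp [hf.1, hf.2, hg.1, hg.2]
      | smul a f _ hf => simp [hf.1, hf.2]
  · have hrange : ({dotFunctional5 ![1, 0, 0, 0, 0], dotFunctional5 ![0, 0, 4, -4, 1],
        dotFunctional5 ![2, -2, 1, 0, 0]} : Set (Module.Dual ℚ (Fin 5 → ℚ))) =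
        Set.range ![dotFunctional5 ![1, 0, 0, 0, 0], dotFunctional5 ![0, 0, 4, -4, 1],
          dotFunctional5 ![2, -2, 1, 0, 0]] := by
      ext x
      simp only [Set.mem_insert_iff, Set.mem_singleton_iff, Set.mem_range,
        Fin.exists_fin_succ, IsEmpty.exists_iff, Matrix.cons_val_zero,
        Matrix.cons_val_succ]
      tauto
    rw [hrange, finrank_span_eq_card]
    · simp
    · rw [Fintype.linearIndependent_iff]
      intro g hg
      rw [Fin.sum_univ_three] at hg
      simp only [Matrix.cons_val_zero, Matrix.cons_val_one, Matrix.head_cons,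
        Matrix.cons_val_two, Matrix.tail_cons] at hg
      have e0 := DFunLike.congr_fun hg (Pi.single 0 1)
      have e1 := DFunLike.congr_fun hg (Pi.single 1 1)
      have e4 := DFunLike.congr_fun hg (Pi.single 4 1)
      simp only [LinearMap.add_apply, LinearMap.smul_apply, LinearMap.zero_apply,
        dotFunctional5_single, smul_eq_mul,
        Matrix.cons_val_zero, Matrix.cons_val_one, Matrix.head_cons,
        Matrix.cons_val_two, Matrix.tail_cons, Matrix.cons_val_four] at e0 e1 e4
      intro i
      fin_cases i <;> simp <;> linarith
end

section
/- For each $n \geq 2$ and each multiset $I$ of positive integers with sum $n$ (a partition of $n$), define integers $\alpha_I, \beta_I$ recursively by: $\alpha_{\{2\}} = 1$, $\beta_{\{2\}} = 0$, $\alpha_{\{1,1\}} = 0$, $\beta_{\{1,1\}} = 1$; and for a partition $I = (r_1, \dots, r_k)$ of $n+1 \geq 3$, $\alpha_I = 2\sum_{j=1}^{k} \alpha_{I_j}$ and $\beta_I = 2\sum_{j=1}^{k} \beta_{I_j}$, where $I_j$ is obtained from $I$ by decreasing the part $r_j$ by one (removing it if $r_j = 1$). Then for every $n \geq 3$: (a)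 $\alpha_{\{n\}} = 2^{n-2}$ and $\beta_{\{n\}} = 0$; (b) $\alpha_{\{1,\dots,1\}} = 0$ and $\beta_{\{1,\dots,1\}} > 0$; (c) for every partition $I$ of $n$ other than $\{n\}$ and $\{1,\dots,1\}$, both $\alpha_I > 0$ and $\beta_I > 0$. -/
/-- Decrease the part `r` of the partition `I` (a multiset of positive integers)
by one, removing it if `r = 1`. -/
def decreasePart (I : Multiset ℕ) (r : ℕ) : Multiset ℕ :=
  if r = 1 then I.erase r else (r - 1) ::ₘ I.erase r

lemma decreasePart_parts {I : Multiset ℕ} (hI : ∀ x ∈ I, 1 ≤ x) {r : ℕ} (hr : r ∈ I) :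
    ∀ x ∈ decreasePart I r, 1 ≤ x := by
  intro x hx
  unfold decreasePart at hx
  split at hx
  · exact hI x (Multiset.mem_of_mem_erase hx)
  · next h =>
    rcases Multiset.mem_cons.1 hx with rfl | h'
    · have h1 := hI r hr; omega
    · exact hI x (Multiset.mem_of_mem_erase h')

lemma decreasePart_sum {I : Multiset ℕ} (hI : ∀ x ∈ I, 1 ≤ x) {r : ℕ} (hr : r ∈ I) :
    (decreasePart I r).sum + 1 = I.sum := by
  have hc : r + (I.erase r).sum = I.sum := by
    conv_rhs => rw [← Multiset.cons_erase hr]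
    rw [Multiset.sum_cons]
  have hr1 := hI r hr
  unfold decreasePart
  split
  · next h => omega
  · next h => rw [Multiset.sum_cons]; omega

lemma decreasePart_card {I : Multiset ℕ} {r : ℕ} (hr : r ∈ I) (h : r ≠ 1) :
    Multiset.card (decreasePart I r) = Multiset.card I := by
  have hpos : 0 < Multiset.card I := Multiset.card_pos.2 (by
    intro h0; rw [h0] at hr; exact absurd hr (Multiset.notMem_zero r))
  unfold decreasePart
  rw [if_neg h, Multiset.card_cons, Multiset.card_erase_of_mem hr,
    Nat.pred_eq_sub_one]
  omega

lemma sum_map_pos {I : Multiset ℕ} {f : ℕ → ℤ} (h0 : ∀ r ∈ I, 0 ≤ f r)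
    {r : ℕ} (hr : r ∈ I) (hpos : 0 < f r) : 0 < (I.map f).sum := by
  have hc := Multiset.cons_erase hr
  rw [← hc, Multiset.map_cons, Multiset.sum_cons]
  have hnn : 0 ≤ ((I.erase r).map f).sum := Multiset.sum_nonneg (by
    intro x hx
    obtain ⟨y, hy, rfl⟩ := Multiset.mem_map.1 hx
    exact h0 y (Multiset.mem_of_mem_erase hy))
  linarith

lemma card_le_sum' {I : Multiset ℕ} (hI : ∀ r ∈ I, 1 ≤ r) : Multiset.card I ≤ I.sum := by
  induction I using Multiset.induction with
  | empty => simp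
  | cons a s ih =>
    simp only [Multiset.card_cons, Multiset.sum_cons]
    have h1 := hI a (Multiset.mem_cons_self a s)
    have h2 := ih (fun r hr => hI r (Multiset.mem_cons_of_mem hr))
    omega

lemma mixed_struct {I : Multiset ℕ} {n : ℕ} (hn : 1 ≤ n) (hI : ∀ r ∈ I, 1 ≤ r)
    (hsum : I.sum = n) (h1 : I ≠ {n}) (h2 : I ≠ Multiset.replicate n 1) :
    2 ≤ Multiset.card I ∧ ∃ s ∈ I, 2 ≤ s := by
  constructor
  · by_contra h
    push_neg at h
    interval_cases hc : Multiset.card I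
    · rw [Multiset.card_eq_zero] at hc
      rw [hc] at hsum; simp at hsum; omega
    · obtain ⟨a, rfl⟩ := Multiset.card_eq_one.1 hc
      simp at hsum
      exact h1 (by rw [hsum])
  · by_contra h
    push_neg at h
    apply h2
    have hall : ∀ r ∈ I, r = 1 := fun r hr => by
      have := hI r hr; have := h r hr; omega
    have hrep : I = Multiset.replicate (Multiset.card I) 1 := Multiset.eq_replicate_card.2 hall
    rw [hrep] at hsum
    rw [Multiset.sum_replicate, smul_eq_mul, mul_one] at hsum
    rw [hrep, hsum]

/-- Combinatorial core of the theorem that for `n`-folds with `n ≥ 3` the only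
diffeomorphism-invariant Chern number is the Euler number: if `α I, β I` are the
universal coefficients expressing the Chern number `c_I` of `X × (ℂP¹)^{n-2}` as
`α I · c₂(X) + β I · c₁²(X)`, defined by the recursion coming from the product
formula with base cases `α {2} = 1, β {2} = 0, α {1,1} = 0, β {1,1} = 1`, then for
every `n ≥ 3`: `α {n} = 2^{n-2}` and `β {n} = 0`; `α` vanishes and `β` is positive
on the partition `(1,…,1)`; and both `α` and `β` are strictly positive on every
other partition of `n`. -/
theorem chern_coefficients_positivity
    (α β : Multiset ℕ → ℤ)
    (hα2 : α {2} = 1) (hβ2 : β {2} = 0)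
    (hα11 : α {1, 1} = 0) (hβ11 : β {1, 1} = 1)
    (hαrec : ∀ I : Multiset ℕ, (∀ r ∈ I, 1 ≤ r) → 3 ≤ I.sum →
      α I = 2 * (I.map (fun r => α (decreasePart I r))).sum)
    (hβrec : ∀ I : Multiset ℕ, (∀ r ∈ I, 1 ≤ r) → 3 ≤ I.sum →
      β I = 2 * (I.map (fun r => β (decreasePart I r))).sum) :
    ∀ n : ℕ, 3 ≤ n →
      (α {n} = 2 ^ (n - 2) ∧ β {n} = 0) ∧
      (α (Multiset.replicate n 1) = 0 ∧ 0 < β (Multiset.replicate n 1)) ∧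
      (∀ I : Multiset ℕ, (∀ r ∈ I, 1 ≤ r) → I.sum = n →
        I ≠ {n} → I ≠ Multiset.replicate n 1 → 0 < α I ∧ 0 < β I) := by
  suffices h : ∀ n : ℕ, 2 ≤ n →
      (α {n} = 2 ^ (n - 2) ∧ β {n} = 0) ∧
      (α (Multiset.replicate n 1) = 0 ∧ 0 < β (Multiset.replicate n 1)) ∧
      (∀ I : Multiset ℕ, (∀ r ∈ I, 1 ≤ r) → I.sum = n →
        I ≠ {n} → I ≠ Multiset.replicate n 1 → 0 < α I ∧ 0 < β I) by
    intro n hn; exact h n (by omega)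
  intro n hn
  induction n, hn using Nat.le_induction with
  | base =>
    refine ⟨⟨by rw [hα2]; norm_num, hβ2⟩, ⟨?_, ?_⟩, ?_⟩
    · show α {1, 1} = 0
      exact hα11
    · show (0:ℤ) < β {1, 1}
      rw [hβ11]; norm_num
    · intro I hI hsum h1 h2
      exfalso
      obtain ⟨hcard, s, hsI, hs2⟩ := mixed_struct (by omega) hI hsum h1 h2
      have hc := Multiset.cons_erase hsI
      have hsum' : s + (I.erase s).sum = I.sum := by
        conv_rhs => rw [← hc]; rw [Multiset.sum_cons]
      have hcard' : Multiset.card (I.erase s) = Multiset.card I - 1 := by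
        rw [Multiset.card_erase_of_mem hsI, Nat.pred_eq_sub_one]
      have hle : Multiset.card (I.erase s) ≤ (I.erase s).sum :=
        card_le_sum' (fun r hr => hI r (Multiset.mem_of_mem_erase hr))
      omega
  | succ n hn2 ih =>
    obtain ⟨⟨ihα1, ihβ1⟩, ⟨ihα2, ihβ2⟩, ihmix⟩ := ih
    -- consequences of the induction hypothesis
    have hαpos : ∀ J : Multiset ℕ, (∀ r ∈ J, 1 ≤ r) → J.sum = n →
        J ≠ Multiset.replicate n 1 → 0 < α J := by
      intro J hJ hJs hJne
      by_cases h : J = {n}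
      · rw [h, ihα1]; positivity
      · exact (ihmix J hJ hJs h hJne).1
    have hβpos : ∀ J : Multiset ℕ, (∀ r ∈ J, 1 ≤ r) → J.sum = n →
        J ≠ {n} → 0 < β J := by
      intro J hJ hJs hJne
      by_cases h : J = Multiset.replicate n 1
      · rw [h]; exact ihβ2
      · exact (ihmix J hJ hJs hJne h).2
    have hαnn : ∀ J : Multiset ℕ, (∀ r ∈ J, 1 ≤ r) → J.sum = n → 0 ≤ α J := by
      intro J hJ hJs
      by_cases h : J = Multiset.replicate n 1
      · rw [h, ihα2]
      · exact le_of_lt (hαpos J hJ hJs h)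
    have hβnn : ∀ J : Multiset ℕ, (∀ r ∈ J, 1 ≤ r) → J.sum = n → 0 ≤ β J := by
      intro J hJ hJs
      by_cases h : J = {n}
      · rw [h, ihβ1]
      · exact le_of_lt (hβpos J hJ hJs h)
    -- the singleton partition {n+1}
    have hsingle_parts : ∀ r ∈ ({n + 1} : Multiset ℕ), 1 ≤ r := by
      intro r hr; rw [Multiset.mem_singleton] at hr; omega
    have hsingle_sum : (3:ℕ) ≤ ({n + 1} : Multiset ℕ).sum := by
      rw [Multiset.sum_singleton]; omega
    have hd1 : decreasePart {n + 1} (n + 1) = ({n} : Multiset ℕ) := by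
      unfold decreasePart
      rw [if_neg (by omega), Multiset.erase_singleton]
      simp
    -- the replicate partition
    have hrrep : ∀ r ∈ Multiset.replicate (n + 1) 1, r = (1:ℕ) :=
      fun r hr => Multiset.eq_of_mem_replicate hr
    have hrep_parts : ∀ r ∈ Multiset.replicate (n + 1) 1, 1 ≤ r := by
      intro r hr; rw [hrrep r hr]
    have hrep_sum : (Multiset.replicate (n + 1) 1).sum = n + 1 := by
      rw [Multiset.sum_replicate, smul_eq_mul, mul_one]
    have hd2 : decreasePart (Multiset.replicate (n + 1) 1) 1 = Multiset.replicate n 1 := by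
      unfold decreasePart
      rw [if_pos rfl, Multiset.replicate_succ, Multiset.erase_cons_head]
    refine ⟨⟨?_, ?_⟩, ⟨?_, ?_⟩, ?_⟩
    · rw [hαrec {n + 1} hsingle_parts hsingle_sum, Multiset.map_singleton,
        Multiset.sum_singleton, hd1, ihα1,
        show n + 1 - 2 = (n - 2) + 1 by omega, pow_succ]
      ring
    · rw [hβrec {n + 1} hsingle_parts hsingle_sum, Multiset.map_singleton,
        Multiset.sum_singleton, hd1, ihβ1, mul_zero]
    · rw [hαrec _ hrep_parts (by omega)]
      have hmap : (Multiset.replicate (n + 1) 1).map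
          (fun r => α (decreasePart (Multiset.replicate (n + 1) 1) r)) =
          Multiset.replicate (n + 1) (α (Multiset.replicate n 1)) := by
        rw [Multiset.map_replicate, hd2]
      rw [hmap, ihα2, Multiset.sum_replicate, smul_zero, mul_zero]
    · rw [hβrec _ hrep_parts (by omega)]
      have hmap : (Multiset.replicate (n + 1) 1).map
          (fun r => β (decreasePart (Multiset.replicate (n + 1) 1) r)) =
          Multiset.replicate (n + 1) (β (Multiset.replicate n 1)) := by
        rw [Multiset.map_replicate, hd2]
      rw [hmap, Multiset.sum_replicate]
      have hp : (0:ℤ) < (n + 1) • β (Multiset.replicate n 1) :=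
        nsmul_pos ihβ2 (by omega)
      linarith
    -- mixed partitions of n+1
    · intro I hI hsum h1 h2
      obtain ⟨hcard, s, hsI, hs2⟩ := mixed_struct (by omega) hI hsum h1 h2
      have hIsum3 : 3 ≤ I.sum := by omega
      have hchild_parts : ∀ r ∈ I, ∀ x ∈ decreasePart I r, 1 ≤ x :=
        fun r hr => decreasePart_parts hI hr
      have hchild_sum : ∀ r ∈ I, (decreasePart I r).sum = n := by
        intro r hr; have := decreasePart_sum hI hr; omega
      have hαnn' : ∀ r ∈ I, 0 ≤ α (decreasePart I r) :=
        fun r hr => hαnn _ (hchild_parts r hr) (hchild_sum r hr)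
      have hβnn' : ∀ r ∈ I, 0 ≤ β (decreasePart I r) :=
        fun r hr => hβnn _ (hchild_parts r hr) (hchild_sum r hr)
      have hsne1 : s ≠ 1 := by omega
      have hJcard : Multiset.card (decreasePart I s) = Multiset.card I :=
        decreasePart_card hsI hsne1
      have hJne : decreasePart I s ≠ ({n} : Multiset ℕ) := by
        intro h
        rw [h, Multiset.card_singleton] at hJcard
        omega
      constructor
      · -- positivity of α
        rw [hαrec I hI hIsum3]
        by_cases hJrep : decreasePart I s = Multiset.replicate n 1
        · -- the mixed partition is {2, 1, ..., 1}; decrease a part equal to 1 instead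
          have herase_ne : I.erase s ≠ 0 := by
            intro h0
            have := Multiset.card_erase_of_mem hsI
            rw [h0] at this
            simp at this
            omega
          obtain ⟨t, ht⟩ := Multiset.exists_mem_of_ne_zero herase_ne
          have htJ : t ∈ decreasePart I s := by
            unfold decreasePart
            rw [if_neg hsne1]
            exact Multiset.mem_cons_of_mem ht
          have ht1 : t = 1 := by
            rw [hJrep] at htJ
            exact Multiset.eq_of_mem_replicate htJ
          have h1I : (1:ℕ) ∈ I := ht1 ▸ Multiset.mem_of_mem_erase ht
          have hd : decreasePart I 1 = I.erase 1 := by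
            unfold decreasePart; rw [if_pos rfl]
          have hsJ' : s ∈ I.erase 1 := (Multiset.mem_erase_of_ne hsne1).2 hsI
          have hJ'ne : decreasePart I 1 ≠ Multiset.replicate n 1 := by
            rw [hd]
            intro h
            rw [h] at hsJ'
            have := Multiset.eq_of_mem_replicate hsJ'
            omega
          have hpos : 0 < α (decreasePart I 1) :=
            hαpos _ (hchild_parts 1 h1I) (hchild_sum 1 h1I) hJ'ne
          have := sum_map_pos hαnn' h1I hpos
          linarith
        · have hpos : 0 < α (decreasePart I s) :=
            hαpos _ (hchild_parts s hsI) (hchild_sum s hsI) hJrep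
          have := sum_map_pos hαnn' hsI hpos
          linarith
      · -- positivity of β
        rw [hβrec I hI hIsum3]
        have hpos : 0 < β (decreasePart I s) :=
          hβpos _ (hchild_parts s hsI) (hchild_sum s hsI) hJne
        have := sum_map_pos hβnn' hsI hpos
        linarith
end
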